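/- For any constants α, β ∈ ℝ with β² ≥ α², the pair f(x,y) = α·ln((r + √(r² + β² - α²))/2) with r = √(x²+y²), and g(x,y) = β·arctan(y/x), solves the minimal surface system G f_xx - 2F f_xy + E f_yy = 0 and G g_xx - 2F g_xy + E g_yy = 0 on the domain {(x,y) : x > 0, x²+y² > max(0, α²-β²)}, where E = 1+f_x²+g_x², F = f_x f_y + g_x g_y, G = 1+f_y²+g_y². -/

import Mathlib

noncomputable def pdx {E : Type*} [NormedAddCommGroup E] [NormedSpace ℝ E]
    (f : ℝ × ℝ → E) : ℝ × ℝ → E := fun p => fderiv ℝ f p (1, 0)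

noncomputable def pdy {E : Type*} [NormedAddCommGroup E] [NormedSpace ℝ E]
    (f : ℝ × ℝ → E) : ℝ × ℝ → E := fun p => fderiv ℝ f p (0, 1)

noncomputable def Ec (f g : ℝ × ℝ → ℝ) : ℝ × ℝ → ℝ :=
  fun p => 1 + (pdx f p) ^ 2 + (pdx g p) ^ 2

noncomputable def Fc (f g : ℝ × ℝ → ℝ) : ℝ × ℝ → ℝ :=
  fun p => pdx f p * pdy f p + pdx g p * pdy g p

noncomputable def Gc (f g : ℝ × ℝ → ℝ) : ℝ × ℝ → ℝ :=
  fun p => 1 + (pdy f p) ^ 2 + (pdy g p) ^ 2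

noncomputable def om (f g : ℝ × ℝ → ℝ) : ℝ × ℝ → ℝ :=
  fun p => Real.sqrt (Ec f g p * Gc f g p - (Fc f g p) ^ 2)

noncomputable def Wg (p : ℝ × ℝ → ℝ) : ℝ × ℝ → ℝ :=
  fun v => Real.sqrt (1 + (pdx p v) ^ 2 + (pdy p v) ^ 2)

/-!
Write `q = x² + y²`, `r = √q`, and `s = √(q + c)` with `c = β² - α²`. Then `f = α log((r + s)/2)`
is radial with `f' = α / s`, and `g = β θ` is a multiple of the polar angle. The operator
`G ∂ₓₓ - 2F ∂ₓᵧ + E ∂ᵧᵧ` applied to `h` is `Δh + D²h(∇f^⊥, ∇f^⊥) + D²h(∇g^⊥, ∇g^⊥)`, where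
`∇f^⊥` is angular and `∇g^⊥` is radial. For `h = g` each term vanishes, because `θ` is harmonic
and its Hessian vanishes on radial and on angular vectors. For `h = f` the operator gives
`f''(1 + β²/r²) + (f'/r)(1 + f'²) = α (s² + α² - r² - β²) / (r s³)`, which is zero by the choice
of `c`.
-/

open Real Filter Topology ContinuousLinearMap

noncomputable def covector (a b : ℝ) : ℝ × ℝ →L[ℝ] ℝ := a • fst ℝ ℝ ℝ + b • snd ℝ ℝ ℝ

section Covector

variable {F G P Q : ℝ × ℝ → ℝ} {L : ℝ × ℝ →L[ℝ] ℝ} {a b c d a' b' : ℝ} {v : ℝ × ℝ}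

@[simp]
lemma covector_apply (u : ℝ × ℝ) : covector a b u = a * u.1 + b * u.2 := rfl

lemma HasFDerivAt.to_covector (h : HasFDerivAt F L v) (ha : L (1, 0) = a) (hb : L (0, 1) = b) :
    HasFDerivAt F (covector a b) v := by
  refine h.congr_fderiv (ContinuousLinearMap.ext fun u => ?_)
  have hu : u = u.1 • ((1 : ℝ), (0 : ℝ)) + u.2 • ((0 : ℝ), (1 : ℝ)) := by ext <;> simp
  rw [hu, map_add, map_smul, map_smul, ha, hb]
  simp [mul_comm]

lemma HasFDerivAt.congr_covector (h : HasFDerivAt F (covector a b) v) (ha : a = a') (hb : b = b') :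
    HasFDerivAt F (covector a' b') v :=
  ha ▸ hb ▸ h

lemma hasFDerivAt_fst_covector (v : ℝ × ℝ) : HasFDerivAt (fun w : ℝ × ℝ => w.1) (covector 1 0) v :=
  hasFDerivAt_fst.to_covector (by simp) (by simp)

lemma hasFDerivAt_snd_covector (v : ℝ × ℝ) : HasFDerivAt (fun w : ℝ × ℝ => w.2) (covector 0 1) v :=
  hasFDerivAt_snd.to_covector (by simp) (by simp)

lemma HasFDerivAt.add_covector (hF : HasFDerivAt F (covector a b) v)
    (hG : HasFDerivAt G (covector c d) v) :
    HasFDerivAt (fun w => F w + G w) (covector (a + c) (b + d)) v :=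
  (hF.add hG).to_covector (by simp) (by simp)

lemma HasFDerivAt.mul_covector (hF : HasFDerivAt F (covector a b) v)
    (hG : HasFDerivAt G (covector c d) v) :
    HasFDerivAt (fun w => F w * G w) (covector (F v * c + G v * a) (F v * d + G v * b)) v :=
  (hF.mul hG).to_covector (by simp) (by simp)

lemma HasDerivAt.comp_covector {φ : ℝ → ℝ} {φ' : ℝ} (hφ : HasDerivAt φ φ' (F v))
    (hF : HasFDerivAt F (covector a b) v) :
    HasFDerivAt (fun w => φ (F w)) (covector (φ' * a) (φ' * b)) v :=
  (hφ.comp_hasFDerivAt v hF).to_covector (by simp) (by simp)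

lemma HasFDerivAt.div_covector (hF : HasFDerivAt F (covector a b) v)
    (hG : HasFDerivAt G (covector c d) v) (h0 : G v ≠ 0) :
    HasFDerivAt (fun w => F w / G w)
      (covector ((a * G v - F v * c) / G v ^ 2) ((b * G v - F v * d) / G v ^ 2)) v :=
  (hF.mul_covector ((hasDerivAt_inv h0).comp_covector hG)).congr_covector
    (by field_simp; ring) (by field_simp; ring)

lemma HasFDerivAt.pdx_eq (h : HasFDerivAt F (covector a b) v) : pdx F v = a := by
  simp [pdx, h.fderiv]

lemma HasFDerivAt.pdy_eq (h : HasFDerivAt F (covector a b) v) : pdy F v = b := by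
  simp [pdy, h.fderiv]

lemma Filter.EventuallyEq.pdx_eq (h : F =ᶠ[𝓝 v] G) : pdx F v = pdx G v := by
  simp only [pdx, h.fderiv_eq]

lemma Filter.EventuallyEq.pdy_eq (h : F =ᶠ[𝓝 v] G) : pdy F v = pdy G v := by
  simp only [pdy, h.fderiv_eq]

lemma pdx_eventuallyEq (h : ∀ᶠ w in 𝓝 v, HasFDerivAt F (covector (P w) (Q w)) w) :
    pdx F =ᶠ[𝓝 v] P :=
  h.mono fun _ hw => hw.pdx_eq

lemma pdy_eventuallyEq (h : ∀ᶠ w in 𝓝 v, HasFDerivAt F (covector (P w) (Q w)) w) :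
    pdy F =ᶠ[𝓝 v] Q :=
  h.mono fun _ hw => hw.pdy_eq

end Covector

def normSq (w : ℝ × ℝ) : ℝ := w.1 ^ 2 + w.2 ^ 2

lemma hasFDerivAt_normSq (v : ℝ × ℝ) : HasFDerivAt normSq (covector (2 * v.1) (2 * v.2)) v :=
  (((hasDerivAt_pow 2 _).comp_covector (hasFDerivAt_fst_covector v)).add_covector
    ((hasDerivAt_pow 2 _).comp_covector (hasFDerivAt_snd_covector v))).congr_covector
    (by norm_num) (by norm_num)

noncomputable def radialLog (α c : ℝ) (w : ℝ × ℝ) : ℝ :=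
  α * log ((√(normSq w) + √(normSq w + c)) / 2)

noncomputable def scaledArctan (β : ℝ) (w : ℝ × ℝ) : ℝ := β * arctan (w.2 / w.1)

variable {α β c : ℝ} {v : ℝ × ℝ}

lemma hasFDerivAt_normSq_add (c : ℝ) (v : ℝ × ℝ) :
    HasFDerivAt (fun w => normSq w + c) (covector (2 * v.1) (2 * v.2)) v :=
  (((hasDerivAt_id' _).add_const c).comp_covector (hasFDerivAt_normSq v)).congr_covector
    (one_mul _) (one_mul _)

lemma hasFDerivAt_radialLog (hq : 0 < normSq v) (hqc : 0 < normSq v + c) :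
    HasFDerivAt (radialLog α c)
      (covector (α * v.1 / √(normSq v * (normSq v + c)))
        (α * v.2 / √(normSq v * (normSq v + c)))) v := by
  have hr0 : 0 < √(normSq v) := sqrt_pos.2 hq
  have hs0 : 0 < √(normSq v + c) := sqrt_pos.2 hqc
  have hrs : 0 < √(normSq v) + √(normSq v + c) := add_pos hr0 hs0
  have hr := (hasDerivAt_sqrt hq.ne').comp_covector (hasFDerivAt_normSq v)
  have hs := (hasDerivAt_sqrt hqc.ne').comp_covector (hasFDerivAt_normSq_add c v)
  have h := ((hasDerivAt_id' _).const_mul α).comp_covector <|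
    (hasDerivAt_log (div_pos hrs two_pos).ne').comp_covector <|
    ((hasDerivAt_id' _).div_const 2).comp_covector (hr.add_covector hs)
  refine h.congr_covector ?_ ?_ <;>
  · rw [sqrt_mul hq.le]
    field_simp
    ring

lemma eventually_hasFDerivAt_radialLog (hq : 0 < normSq v) (hqc : 0 < normSq v + c) :
    ∀ᶠ w in 𝓝 v, HasFDerivAt (radialLog α c)
      (covector (α * w.1 / √(normSq w * (normSq w + c)))
        (α * w.2 / √(normSq w * (normSq w + c)))) w := by
  have hcont : Continuous normSq := by unfold normSq; fun_prop
  filter_upwards [(hcont.tendsto v).eventually_const_lt hq,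
    ((hcont.add continuous_const).tendsto v).eventually_const_lt hqc] with w hwq hwqc
  exact hasFDerivAt_radialLog hwq hwqc

lemma hasFDerivAt_sqrt_normSq_mul (hq : 0 < normSq v) (hqc : 0 < normSq v + c) :
    HasFDerivAt (fun w => √(normSq w * (normSq w + c)))
      (covector (v.1 * (2 * normSq v + c) / √(normSq v * (normSq v + c)))
        (v.2 * (2 * normSq v + c) / √(normSq v * (normSq v + c)))) v := by
  have ht : 0 < √(normSq v * (normSq v + c)) := sqrt_pos.2 (mul_pos hq hqc)
  refine ((hasDerivAt_sqrt (mul_pos hq hqc).ne').comp_covector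
    ((hasFDerivAt_normSq v).mul_covector (hasFDerivAt_normSq_add c v))).congr_covector ?_ ?_ <;>
  · field_simp
    ring

lemma hasFDerivAt_radialLog_gradient_fst (hq : 0 < normSq v) (hqc : 0 < normSq v + c) :
    HasFDerivAt (fun w => α * w.1 / √(normSq w * (normSq w + c)))
      (covector
        (α * (normSq v * (normSq v + c) - v.1 ^ 2 * (2 * normSq v + c))
          / √(normSq v * (normSq v + c)) ^ 3)
        (-(α * v.1 * v.2 * (2 * normSq v + c)) / √(normSq v * (normSq v + c)) ^ 3)) v := by
  have ht : 0 < √(normSq v * (normSq v + c)) := sqrt_pos.2 (mul_pos hq hqc)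
  have ht2 := sq_sqrt (mul_pos hq hqc).le
  have hnum := ((hasDerivAt_id' _).const_mul α).comp_covector (hasFDerivAt_fst_covector v)
  refine (hnum.div_covector (hasFDerivAt_sqrt_normSq_mul hq hqc) ht.ne').congr_covector ?_ ?_
  · field_simp
    linear_combination α * ht2
  · field_simp
    ring

lemma hasFDerivAt_radialLog_gradient_snd (hq : 0 < normSq v) (hqc : 0 < normSq v + c) :
    HasFDerivAt (fun w => α * w.2 / √(normSq w * (normSq w + c)))
      (covector (-(α * v.1 * v.2 * (2 * normSq v + c)) / √(normSq v * (normSq v + c)) ^ 3)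
        (α * (normSq v * (normSq v + c) - v.2 ^ 2 * (2 * normSq v + c))
          / √(normSq v * (normSq v + c)) ^ 3)) v := by
  have ht : 0 < √(normSq v * (normSq v + c)) := sqrt_pos.2 (mul_pos hq hqc)
  have ht2 := sq_sqrt (mul_pos hq hqc).le
  have hnum := ((hasDerivAt_id' _).const_mul α).comp_covector (hasFDerivAt_snd_covector v)
  refine (hnum.div_covector (hasFDerivAt_sqrt_normSq_mul hq hqc) ht.ne').congr_covector ?_ ?_
  · field_simp
    ring
  · field_simp
    linear_combination α * ht2

lemma hasFDerivAt_scaledArctan (hx : 0 < v.1) :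
    HasFDerivAt (scaledArctan β) (covector (-β * v.2 / normSq v) (β * v.1 / normSq v)) v := by
  refine (((hasDerivAt_id' _).const_mul β).comp_covector <| (hasDerivAt_arctan _).comp_covector <|
    (hasFDerivAt_snd_covector v).div_covector (hasFDerivAt_fst_covector v) hx.ne').congr_covector
    ?_ ?_ <;>
  · simp only [normSq]
    field_simp
    ring

lemma eventually_hasFDerivAt_scaledArctan (hx : 0 < v.1) :
    ∀ᶠ w in 𝓝 v, HasFDerivAt (scaledArctan β)
      (covector (-β * w.2 / normSq w) (β * w.1 / normSq w)) w := by
  filter_upwards [(continuous_fst.tendsto v).eventually_const_lt hx] with w hw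
  exact hasFDerivAt_scaledArctan hw

lemma hasFDerivAt_scaledArctan_gradient_fst (hq : normSq v ≠ 0) :
    HasFDerivAt (fun w => -β * w.2 / normSq w)
      (covector (2 * β * v.1 * v.2 / normSq v ^ 2) (β * (v.2 ^ 2 - v.1 ^ 2) / normSq v ^ 2)) v := by
  have hnum := ((hasDerivAt_id' _).const_mul (-β)).comp_covector (hasFDerivAt_snd_covector v)
  refine (hnum.div_covector (hasFDerivAt_normSq v) hq).congr_covector ?_ ?_ <;>
  · field_simp
    simp only [normSq]
    ring

lemma hasFDerivAt_scaledArctan_gradient_snd (hq : normSq v ≠ 0) :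
    HasFDerivAt (fun w => β * w.1 / normSq w)
      (covector (β * (v.2 ^ 2 - v.1 ^ 2) / normSq v ^ 2)
        (-(2 * β * v.1 * v.2) / normSq v ^ 2)) v := by
  have hnum := ((hasDerivAt_id' _).const_mul β).comp_covector (hasFDerivAt_fst_covector v)
  refine (hnum.div_covector (hasFDerivAt_normSq v) hq).congr_covector ?_ ?_ <;>
  · field_simp
    simp only [normSq]
    ring

lemma radialLog_minimal_surface_identity {x y q t : ℝ} (hq : x ^ 2 + y ^ 2 = q) (hq0 : q ≠ 0)
    (hqc : q + c ≠ 0) (ht : t ^ 2 = q * (q + c)) (hc : α ^ 2 + c = β ^ 2) :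
    (1 + (α * y / t) ^ 2 + (β * x / q) ^ 2) * (α * (q * (q + c) - x ^ 2 * (2 * q + c)) / t ^ 3)
      - 2 * (α * x / t * (α * y / t) + -β * y / q * (β * x / q))
        * (-(α * x * y * (2 * q + c)) / t ^ 3)
      + (1 + (α * x / t) ^ 2 + (-β * y / q) ^ 2)
        * (α * (q * (q + c) - y ^ 2 * (2 * q + c)) / t ^ 3) = 0 := by
  have ht0 : t ≠ 0 := by rintro rfl; simp_all
  set E := 1 + (α * x / t) ^ 2 + (-β * y / q) ^ 2
  set F := α * x / t * (α * y / t) + -β * y / q * (β * x / q)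
  set G := 1 + (α * y / t) ^ 2 + (β * x / q) ^ 2
  have hquad : G * x ^ 2 - 2 * F * x * y + E * y ^ 2 = q + β ^ 2 := by
    simp only [E, F, G]
    field_simp
    rw [← hq]
    ring
  have htrace : G + E = 2 + α ^ 2 / (q + c) + β ^ 2 / q := by
    simp only [E, G]
    field_simp
    rw [ht, ← hq]
    ring
  calc _ = α / t ^ 3 * ((G + E) * (q * (q + c))
          - (2 * q + c) * (G * x ^ 2 - 2 * F * x * y + E * y ^ 2)) := by ring
    _ = α / t ^ 3 * (q * (α ^ 2 + c - β ^ 2)) := by rw [hquad, htrace]; field_simp; ring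
    _ = 0 := by rw [hc, sub_self, mul_zero, mul_zero]

lemma scaledArctan_minimal_surface_identity (x y q t : ℝ) :
    (1 + (α * y / t) ^ 2 + (β * x / q) ^ 2) * (2 * β * x * y / q ^ 2)
      - 2 * (α * x / t * (α * y / t) + -β * y / q * (β * x / q)) * (β * (y ^ 2 - x ^ 2) / q ^ 2)
      + (1 + (α * x / t) ^ 2 + (-β * y / q) ^ 2) * (-(2 * β * x * y) / q ^ 2) = 0 := by
  ring

theorem stmt_10_general (α β : ℝ) (f g : ℝ × ℝ → ℝ)
    (hfdef : f = fun v => α * Real.log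
      ((Real.sqrt (v.1 ^ 2 + v.2 ^ 2) + Real.sqrt (v.1 ^ 2 + v.2 ^ 2 + β ^ 2 - α ^ 2)) / 2))
    (hgdef : g = fun v => β * Real.arctan (v.2 / v.1)) :
    ∀ v : ℝ × ℝ, 0 < v.1 → max 0 (α ^ 2 - β ^ 2) < v.1 ^ 2 + v.2 ^ 2 →
      Gc f g v * pdx (pdx f) v - 2 * Fc f g v * pdy (pdx f) v + Ec f g v * pdy (pdy f) v = 0 ∧
      Gc f g v * pdx (pdx g) v - 2 * Fc f g v * pdy (pdx g) v + Ec f g v * pdy (pdy g) v = 0 := by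
  intro v hx hv
  obtain ⟨hq, hqc⟩ : 0 < normSq v ∧ 0 < normSq v + (β ^ 2 - α ^ 2) := by
    obtain ⟨hq, hqc⟩ := max_lt_iff.1 hv
    exact ⟨hq, by unfold normSq; linarith⟩
  obtain rfl : f = radialLog α (β ^ 2 - α ^ 2) := by
    rw [hfdef]
    funext w
    simp only [radialLog, normSq, add_sub_assoc]
  obtain rfl : g = scaledArctan β := hgdef
  have hf := eventually_hasFDerivAt_radialLog (α := α) hq hqc
  have hg := eventually_hasFDerivAt_scaledArctan (β := β) hx
  simp only [Ec, Fc, Gc, (pdx_eventuallyEq hf).pdx_eq, (pdx_eventuallyEq hf).pdy_eq,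
    (pdy_eventuallyEq hf).pdy_eq, (pdx_eventuallyEq hg).pdx_eq, (pdx_eventuallyEq hg).pdy_eq,
    (pdy_eventuallyEq hg).pdy_eq, hf.self_of_nhds.pdx_eq, hf.self_of_nhds.pdy_eq,
    hg.self_of_nhds.pdx_eq, hg.self_of_nhds.pdy_eq,
    (hasFDerivAt_radialLog_gradient_fst hq hqc).pdx_eq,
    (hasFDerivAt_radialLog_gradient_fst hq hqc).pdy_eq,
    (hasFDerivAt_radialLog_gradient_snd hq hqc).pdy_eq,
    (hasFDerivAt_scaledArctan_gradient_fst hq.ne').pdx_eq,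
    (hasFDerivAt_scaledArctan_gradient_fst hq.ne').pdy_eq,
    (hasFDerivAt_scaledArctan_gradient_snd hq.ne').pdy_eq]
  exact ⟨radialLog_minimal_surface_identity rfl hq.ne' hqc.ne' (sq_sqrt (mul_pos hq hqc).le)
    (by ring), scaledArctan_minimal_surface_identity _ _ _ _⟩

theorem stmt_10 (α β : ℝ) (hβα : α ^ 2 ≤ β ^ 2) (f g : ℝ × ℝ → ℝ)
    (hfdef : f = fun v => α * Real.log
      ((Real.sqrt (v.1 ^ 2 + v.2 ^ 2) + Real.sqrt (v.1 ^ 2 + v.2 ^ 2 + β ^ 2 - α ^ 2)) / 2))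
    (hgdef : g = fun v => β * Real.arctan (v.2 / v.1)) :
    ∀ v : ℝ × ℝ, 0 < v.1 → max 0 (α ^ 2 - β ^ 2) < v.1 ^ 2 + v.2 ^ 2 →
      Gc f g v * pdx (pdx f) v - 2 * Fc f g v * pdy (pdx f) v + Ec f g v * pdy (pdy f) v = 0 ∧
      Gc f g v * pdx (pdx g) v - 2 * Fc f g v * pdy (pdx g) v + Ec f g v * pdy (pdy g) v = 0 :=
  stmt_10_general α β f g hfdef hgdef
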